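/- For z ∈ Ĩ_n, every atom w ∈ A(z) has length ℓ(w) = ℓ̂(z) := (ℓ(z) + ℓ'(z))/2. -/

import Mathlib

/-!
If `ℓ(v s_i) > ℓ(v)` then `(v s_i)⁻¹ ∘ (v s_i) = s_i ∘ (v⁻¹ ∘ v) ∘ s_i`, and `v⁻¹ ∘ v` is an
involution because `(a ∘ b)⁻¹ = b⁻¹ ∘ a⁻¹`. For an involution `z`, `s_i ∘ z ∘ s_i` is `z` itself
when `i` is a right descent of `z`. Otherwise it is `z s_i` if `s_i` commutes with `z` (one more
inversion, one more 2-cycle) and `s_i z s_i` if not (two more inversions, the 2-cycles moved by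
`s_i`); either way `ℓ + ℓ'` grows by exactly `2`. Inducting along a reduced word of `w` gives
`ℓ(z) + ℓ'(z) ≤ 2 ℓ(w)` for `z = w⁻¹ ∘ w`. The same induction builds `v` with `v⁻¹ ∘ v = z` and
equality, appending `s_i` to `v` only at the steps where `z` changes: there `i` is an ascent of
`v⁻¹ ∘ v`, hence of `v`, since a right descent of `v` is inherited by `v⁻¹ ∘ v`. An atom is no
longer than this `v`.
-/

open Finset

/-- `w` is an element of the affine symmetric group `S̃_n`: a bijection `ℤ → ℤ` with
`w (i + n) = w i + n` for all `i` and `∑_{i=1}^n w i = n (n+1)/2`. -/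
def IsAffine (n : ℕ) (w : Equiv.Perm ℤ) : Prop :=
  (∀ i : ℤ, w (i + n) = w i + n) ∧ ∑ i ∈ Finset.Icc (1 : ℤ) (n : ℤ), (w i - i) = 0

/-- The Coxeter length of `w ∈ S̃_n`: the number of inversions `(i, j)`, `i < j`,
`w i > w j`, counted up to the equivalence `(i,j) ∼ (i+n, j+n)` (representatives with
`i ∈ [n]`). -/
noncomputable def affLen (n : ℕ) (w : Equiv.Perm ℤ) : ℕ :=
  Nat.card {p : ℤ × ℤ // 1 ≤ p.1 ∧ p.1 ≤ (n : ℤ) ∧ p.1 < p.2 ∧ w p.2 < w p.1}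

/-- The absolute length of an involution `z ∈ Ĩ_n`: the number of 2-cycles
`(i, j)` with `i < j = z i`, counted up to the equivalence `(i,j) ∼ (i+n, j+n)`. -/
noncomputable def absLen (n : ℕ) (z : Equiv.Perm ℤ) : ℕ :=
  Nat.card {p : ℤ × ℤ // 1 ≤ p.1 ∧ p.1 ≤ (n : ℤ) ∧ p.1 < p.2 ∧ z p.1 = p.2}

/-- The underlying function of the reflection `t_{i j}`: it sends `i + m n ↦ j + m n` and
`j + m n ↦ i + m n` for all `m`, fixing everything else. -/
def tFun (n : ℕ) (i j x : ℤ) : ℤ :=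
  if (n : ℤ) ∣ x - i then x + (j - i) else if (n : ℤ) ∣ x - j then x - (j - i) else x

theorem tFun_comp (n : ℕ) (i j x : ℤ) : tFun n j i (tFun n i j x) = x := by
  unfold tFun
  by_cases h1 : (n : ℤ) ∣ x - i
  · rw [if_pos h1]
    have c1 : (n : ℤ) ∣ x + (j - i) - j := by
      have e : x + (j - i) - j = x - i := by ring
      rw [e]; exact h1
    rw [if_pos c1]; ring
  · rw [if_neg h1]
    by_cases h2 : (n : ℤ) ∣ x - j
    · rw [if_pos h2]
      have c1 : ¬ (n : ℤ) ∣ x - (j - i) - j := by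
        intro hc
        apply h1
        have e : x - i = 2 * (x - j) - (x - (j - i) - j) := by ring
        rw [e]
        exact dvd_sub (Dvd.dvd.mul_left h2 2) hc
      have c2 : (n : ℤ) ∣ x - (j - i) - i := by
        have e : x - (j - i) - i = x - j := by ring
        rw [e]; exact h2
      rw [if_neg c1, if_pos c2]; ring
    · simp only [if_neg h1, if_neg h2]

/-- The reflection `t_{i j} ∈ S̃_n`. -/
def tPerm (n : ℕ) (i j : ℤ) : Equiv.Perm ℤ :=
  ⟨tFun n i j, tFun n j i, fun x => tFun_comp n i j x, fun x => tFun_comp n j i x⟩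

/-- The simple generator `s_i = t_{i, i+1} ∈ S̃_n`. -/
def sPerm (n : ℕ) (i : ℤ) : Equiv.Perm ℤ := tPerm n i (i + 1)

/-- `D` is the Demazure (0-Hecke) product on the affine symmetric group `S̃_n`: the unique
associative product with `w ∘ s_i = w` if `ℓ(w s_i) < ℓ(w)` and `w ∘ s_i = w s_i` if
`ℓ(w s_i) > ℓ(w)`. -/
def IsDemazure (n : ℕ) (D : Equiv.Perm ℤ → Equiv.Perm ℤ → Equiv.Perm ℤ) : Prop :=
  (∀ u v w : Equiv.Perm ℤ, IsAffine n u → IsAffine n v → IsAffine n w →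
    D (D u v) w = D u (D v w)) ∧
  (∀ u v : Equiv.Perm ℤ, IsAffine n u → IsAffine n v → IsAffine n (D u v)) ∧
  (∀ w : Equiv.Perm ℤ, IsAffine n w → D w 1 = w ∧ D 1 w = w) ∧
  (∀ w : Equiv.Perm ℤ, IsAffine n w → ∀ i : ℤ,
    (affLen n (w * sPerm n i) < affLen n w → D w (sPerm n i) = w) ∧
    (affLen n w < affLen n (w * sPerm n i) → D w (sPerm n i) = w * sPerm n i))

/-- `w` is an atom of the involution `z ∈ Ĩ_n` (relative to the Demazure product `D`):
`w` has minimal length among all `v ∈ S̃_n` with `z = v⁻¹ ∘ v`. -/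
def IsAtomOf (n : ℕ) (D : Equiv.Perm ℤ → Equiv.Perm ℤ → Equiv.Perm ℤ)
    (z w : Equiv.Perm ℤ) : Prop :=
  IsAffine n w ∧ D w⁻¹ w = z ∧
    ∀ v : Equiv.Perm ℤ, IsAffine n v → D v⁻¹ v = z → affLen n w ≤ affLen n v

section Window

variable {n : ℕ}

def pairShift (n : ℕ) (m : ℤ) (p : ℤ × ℤ) : ℤ × ℤ := (p.1 + m * n, p.2 + m * n)

/-- For `pairShift`-invariant `P`, the number of `P`-pairs up to translation. -/
noncomputable def windowCard (n : ℕ) (P : ℤ × ℤ → Prop) : ℕ :=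
  Nat.card {p : ℤ × ℤ // 1 ≤ p.1 ∧ p.1 ≤ (n : ℤ) ∧ P p}

def windowIndex (n : ℕ) (x : ℤ) : ℤ := (x - 1) / n

def windowRep (n : ℕ) (x : ℤ) : ℤ := x - windowIndex n x * n

lemma mem_window_windowRep (hn : 0 < n) (x : ℤ) : 1 ≤ windowRep n x ∧ windowRep n x ≤ n := by
  have hn' : (0 : ℤ) < n := by exact_mod_cast hn
  have h := Int.emod_add_mul_ediv (x - 1) n
  have h0 := Int.emod_nonneg (x - 1) hn'.ne'
  have h1 := Int.emod_lt_of_pos (x - 1) hn'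
  unfold windowRep windowIndex
  constructor <;> linarith

lemma windowRep_eq_add_mul (x : ℤ) : windowRep n x = x + (-windowIndex n x) * n := by
  unfold windowRep; ring

lemma dvd_windowRep_sub (x : ℤ) : (n : ℤ) ∣ windowRep n x - x :=
  ⟨-windowIndex n x, by unfold windowRep; ring⟩

lemma windowIndex_add_mul (hn : 0 < n) (x m : ℤ) :
    windowIndex n (x + m * n) = windowIndex n x + m := by
  unfold windowIndex
  rw [show x + m * n - 1 = x - 1 + m * n by ring, Int.add_mul_ediv_right _ _ (by omega)]

lemma windowIndex_eq_zero {x : ℤ} (h₁ : 1 ≤ x) (h₂ : x ≤ n) : windowIndex n x = 0 :=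
  Int.ediv_eq_zero_of_lt (by omega) (by omega)

lemma windowRep_add_mul (hn : 0 < n) (x m : ℤ) : windowRep n (x + m * n) = windowRep n x := by
  unfold windowRep
  rw [windowIndex_add_mul hn]
  ring

lemma windowRep_eq_self {x : ℤ} (h₁ : 1 ≤ x) (h₂ : x ≤ n) : windowRep n x = x := by
  simp [windowRep, windowIndex_eq_zero h₁ h₂]

lemma eq_of_dvd_sub_of_mem_window {a b : ℤ} (ha₁ : 1 ≤ a) (ha₂ : a ≤ n) (hb₁ : 1 ≤ b)
    (hb₂ : b ≤ n) (h : (n : ℤ) ∣ a - b) : a = b := by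
  have := Int.eq_zero_of_abs_lt_dvd h (abs_lt.mpr ⟨by omega, by omega⟩)
  omega

def pairReduce (n : ℕ) (p : ℤ × ℤ) : ℤ × ℤ := pairShift n (-windowIndex n p.1) p

lemma pairReduce_eq (p : ℤ × ℤ) : pairReduce n p = pairShift n (-windowIndex n p.1) p := rfl

lemma pairReduce_mem_window (hn : 0 < n) (p : ℤ × ℤ) :
    1 ≤ (pairReduce n p).1 ∧ (pairReduce n p).1 ≤ n := by
  rw [show (pairReduce n p).1 = windowRep n p.1 by
    simp only [pairReduce, pairShift, windowRep]; ring]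
  exact mem_window_windowRep hn p.1

lemma pairReduce_pairShift (hn : 0 < n) (m : ℤ) (p : ℤ × ℤ) :
    pairReduce n (pairShift n m p) = pairReduce n p := by
  simp only [pairReduce, pairShift, windowIndex_add_mul hn, Prod.mk.injEq]
  constructor <;> ring

lemma pairReduce_of_mem_window {p : ℤ × ℤ} (h₁ : 1 ≤ p.1) (h₂ : p.1 ≤ n) :
    pairReduce n p = p := by
  simp [pairReduce, pairShift, windowIndex_eq_zero h₁ h₂]

theorem windowCard_congr (hn : 0 < n) {P Q : ℤ × ℤ → Prop} (e : ℤ × ℤ ≃ ℤ × ℤ)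
    (he : ∀ m p, e (pairShift n m p) = pairShift n m (e p))
    (hP : ∀ m p, P p → P (pairShift n m p)) (hQ : ∀ p, Q (e p) ↔ P p) :
    windowCard n Q = windowCard n P := by
  have he' : ∀ m q, e.symm (pairShift n m q) = pairShift n m (e.symm q) := fun m q => by
    rw [e.symm_apply_eq, he, e.apply_symm_apply]
  have hPQ : ∀ q, Q q → P (pairReduce n (e.symm q)) := fun q hq => by
    rw [pairReduce_eq]
    exact hP _ _ ((hQ _).mp (by rwa [e.apply_symm_apply]))
  have hQP : ∀ p, P p → Q (pairReduce n (e p)) := fun p hp => by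
    rw [pairReduce_eq, ← he, hQ]
    exact hP _ _ hp
  have hinv : ∀ q, 1 ≤ q.1 → q.1 ≤ (n : ℤ) → pairReduce n (e (pairReduce n (e.symm q))) = q :=
    fun q h₁ h₂ => by
      rw [pairReduce_eq (e.symm q), he, e.apply_symm_apply, pairReduce_pairShift hn,
        pairReduce_of_mem_window h₁ h₂]
  have hinv' : ∀ p, 1 ≤ p.1 → p.1 ≤ (n : ℤ) → pairReduce n (e.symm (pairReduce n (e p))) = p :=
    fun p h₁ h₂ => by
      rw [pairReduce_eq (e p), he', e.symm_apply_apply, pairReduce_pairShift hn,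
        pairReduce_of_mem_window h₁ h₂]
  exact Nat.card_congr
    ⟨fun q => ⟨_, (pairReduce_mem_window hn _).1, (pairReduce_mem_window hn _).2, hPQ _ q.2.2.2⟩,
      fun p => ⟨_, (pairReduce_mem_window hn _).1, (pairReduce_mem_window hn _).2, hQP _ p.2.2.2⟩,
      fun q => Subtype.ext (hinv _ q.2.1 q.2.2.1), fun p => Subtype.ext (hinv' _ p.2.1 p.2.2.1)⟩

def IsAdjacentPair (n : ℕ) (i : ℤ) (p : ℤ × ℤ) : Prop := (n : ℤ) ∣ p.1 - i ∧ p.2 = p.1 + 1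

theorem windowCard_or_isAdjacentPair (hn : 0 < n) {P : ℤ × ℤ → Prop} (i : ℤ)
    (hP : ∀ p, IsAdjacentPair n i p → ¬ P p)
    (hfin : {p : ℤ × ℤ | 1 ≤ p.1 ∧ p.1 ≤ (n : ℤ) ∧ P p}.Finite) :
    windowCard n (fun p => P p ∨ IsAdjacentPair n i p) = windowCard n P + 1 := by
  set r := windowRep n i
  have hr := mem_window_windowRep hn i
  have hset : {p : ℤ × ℤ | 1 ≤ p.1 ∧ p.1 ≤ (n : ℤ) ∧ (P p ∨ IsAdjacentPair n i p)} =
      insert (r, r + 1) {p | 1 ≤ p.1 ∧ p.1 ≤ (n : ℤ) ∧ P p} := by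
    ext ⟨a, b⟩
    simp only [Set.mem_ofPred_eq, Set.mem_insert_iff, Prod.mk.injEq, IsAdjacentPair]
    constructor
    · rintro ⟨h₁, h₂, hp | ⟨hd, rfl⟩⟩
      · exact Or.inr ⟨h₁, h₂, hp⟩
      · have : a = r := eq_of_dvd_sub_of_mem_window h₁ h₂ hr.1 hr.2
          (by simpa using dvd_sub hd (dvd_windowRep_sub i))
        exact Or.inl ⟨this, by rw [this]⟩
    · rintro (⟨rfl, rfl⟩ | ⟨h₁, h₂, hp⟩)
      · exact ⟨hr.1, hr.2, Or.inr ⟨dvd_windowRep_sub i, rfl⟩⟩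
      · exact ⟨h₁, h₂, Or.inl hp⟩
  have hnot : (r, r + 1) ∉ {p : ℤ × ℤ | 1 ≤ p.1 ∧ p.1 ≤ (n : ℤ) ∧ P p} := fun h =>
    hP _ ⟨dvd_windowRep_sub i, rfl⟩ h.2.2
  show Nat.card ↥{p : ℤ × ℤ | 1 ≤ p.1 ∧ p.1 ≤ (n : ℤ) ∧ (P p ∨ IsAdjacentPair n i p)} =
    Nat.card ↥{p : ℤ × ℤ | 1 ≤ p.1 ∧ p.1 ≤ (n : ℤ) ∧ P p} + 1
  rw [Nat.card_coe_set_eq, Nat.card_coe_set_eq, hset, Set.ncard_insert_of_notMem hnot hfin]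

end Window

section Affine

variable {n : ℕ} {u v w : Equiv.Perm ℤ}

lemma periodic_apply_sub {f : ℤ → ℤ} (hf : ∀ x, f (x + n) = f x + n) :
    Function.Periodic (fun x => f x - x) n :=
  fun x => by simp only [hf]; ring

lemma apply_add_mul_of_apply_add {f : ℤ → ℤ} (hf : ∀ x, f (x + n) = f x + n) (x m : ℤ) :
    f (x + m * n) = f x + m * n := by
  have := (periodic_apply_sub hf).int_mul m x
  simp only [Int.cast_id] at this
  linarith

lemma IsAffine.apply_add_mul (hw : IsAffine n w) (x m : ℤ) : w (x + m * n) = w x + m * n :=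
  apply_add_mul_of_apply_add hw.1 x m

lemma IsAffine.dvd_sub_iff (hw : IsAffine n w) {x y : ℤ} :
    (n : ℤ) ∣ w x - w y ↔ (n : ℤ) ∣ x - y := by
  constructor
  · rintro ⟨k, hk⟩
    have : x = y + k * n := w.injective (by rw [hw.apply_add_mul]; linarith)
    exact ⟨k, by rw [this]; ring⟩
  · rintro ⟨k, hk⟩
    rw [show x = y + k * n by linarith, hw.apply_add_mul]
    exact ⟨k, by ring⟩

lemma inv_apply_add_of_apply_add (hv : ∀ x, v (x + n) = v x + n) (x : ℤ) :
    v⁻¹ (x + n) = v⁻¹ x + n :=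
  v.injective (by simp [hv])

lemma sum_window_comp (hn : 0 < n) (hv : ∀ x, v (x + n) = v x + n) {g : ℤ → ℤ}
    (hg : Function.Periodic g n) :
    ∑ x ∈ Icc (1 : ℤ) n, g (v x) = ∑ x ∈ Icc (1 : ℤ) n, g x := by
  have hv' := inv_apply_add_of_apply_add hv
  refine Finset.sum_nbij' (fun x => windowRep n (v x)) (fun y => windowRep n (v⁻¹ y))
    (fun x _ => Finset.mem_Icc.mpr (mem_window_windowRep hn _))
    (fun y _ => Finset.mem_Icc.mpr (mem_window_windowRep hn _)) ?_ ?_ ?_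
  · intro x hx
    rw [Finset.mem_Icc] at hx
    rw [windowRep_eq_add_mul (v x), apply_add_mul_of_apply_add hv', Equiv.Perm.coe_inv,
      Equiv.symm_apply_apply, windowRep_add_mul hn, windowRep_eq_self hx.1 hx.2]
  · intro y hy
    rw [Finset.mem_Icc] at hy
    rw [windowRep_eq_add_mul (v⁻¹ y), apply_add_mul_of_apply_add hv, Equiv.Perm.coe_inv,
      Equiv.apply_symm_apply, windowRep_add_mul hn, windowRep_eq_self hy.1 hy.2]
  · intro x _
    simp only [windowRep]
    exact (hg.sub_int_mul_eq _).symm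

lemma isAffine_one : IsAffine n 1 := ⟨fun _ => rfl, by simp⟩

lemma IsAffine.mul (hn : 0 < n) (hu : IsAffine n u) (hv : IsAffine n v) : IsAffine n (u * v) := by
  refine ⟨fun x => by simp [hv.1, hu.1], ?_⟩
  calc ∑ x ∈ Icc (1 : ℤ) n, ((u * v) x - x)
      = ∑ x ∈ Icc (1 : ℤ) n, (u (v x) - v x) + ∑ x ∈ Icc (1 : ℤ) n, (v x - x) := by
        rw [← Finset.sum_add_distrib]; simp
    _ = 0 := by rw [sum_window_comp hn hv.1 (periodic_apply_sub hu.1), hu.2, hv.2, add_zero]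

lemma IsAffine.inv (hn : 0 < n) (hw : IsAffine n w) : IsAffine n w⁻¹ := by
  have hw' := inv_apply_add_of_apply_add hw.1
  refine ⟨hw', ?_⟩
  rw [← sum_window_comp hn hw.1 (periodic_apply_sub hw')]
  simp only [Equiv.Perm.coe_inv, Equiv.symm_apply_apply]
  rw [← neg_eq_zero, ← Finset.sum_neg_distrib, ← hw.2]
  simp

end Affine

section SimpleReflection

variable {n : ℕ} {i j x : ℤ} {w : Equiv.Perm ℤ}

lemma sPerm_apply (i x : ℤ) : sPerm n i x =
    if (n : ℤ) ∣ x - i then x + 1 else if (n : ℤ) ∣ x - (i + 1) then x - 1 else x := by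
  show tFun n i (i + 1) x = _
  simp only [tFun, add_sub_cancel_left]

lemma not_dvd_sub_add_one (hn : 2 ≤ n) (h : (n : ℤ) ∣ x - i) : ¬ (n : ℤ) ∣ x - (i + 1) := by
  intro h'
  have := Int.le_of_dvd one_pos (by simpa using dvd_sub h h')
  omega

lemma sPerm_apply_of_dvd (h : (n : ℤ) ∣ x - i) : sPerm n i x = x + 1 := by
  rw [sPerm_apply, if_pos h]

lemma sPerm_apply_of_dvd_add_one (hn : 2 ≤ n) (h : (n : ℤ) ∣ x - (i + 1)) :
    sPerm n i x = x - 1 := by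
  rw [sPerm_apply, if_neg fun h' => not_dvd_sub_add_one hn h' h, if_pos h]

lemma sPerm_apply_of_not_dvd (h : ¬ (n : ℤ) ∣ x - i) (h' : ¬ (n : ℤ) ∣ x - (i + 1)) :
    sPerm n i x = x := by
  rw [sPerm_apply, if_neg h, if_neg h']

lemma sPerm_apply_le : sPerm n i x ≤ x + 1 := by
  rw [sPerm_apply]; split_ifs <;> omega

lemma le_sPerm_apply : x - 1 ≤ sPerm n i x := by
  rw [sPerm_apply]; split_ifs <;> omega

lemma dvd_sub_of_sPerm_apply_eq (h : sPerm n i x = x + 1) : (n : ℤ) ∣ x - i := by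
  rw [sPerm_apply] at h; split_ifs at h with h₁ <;> first | exact h₁ | omega

lemma sPerm_apply_add (i x : ℤ) : sPerm n i (x + n) = sPerm n i x + n := by
  simp only [sPerm_apply, show x + n - i = x - i + n by ring,
    show x + n - (i + 1) = x - (i + 1) + n by ring, dvd_add_self_right]
  split_ifs <;> ring

lemma sPerm_sPerm (hn : 2 ≤ n) (i x : ℤ) : sPerm n i (sPerm n i x) = x := by
  by_cases h : (n : ℤ) ∣ x - i
  · rw [sPerm_apply_of_dvd h, sPerm_apply_of_dvd_add_one hn (by simpa using h)]
    ring
  by_cases h' : (n : ℤ) ∣ x - (i + 1)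
  · rw [sPerm_apply_of_dvd_add_one hn h', sPerm_apply_of_dvd (by rwa [sub_sub, add_comm 1 i])]
    ring
  rw [sPerm_apply_of_not_dvd h h', sPerm_apply_of_not_dvd h h']

lemma sPerm_mul_self (hn : 2 ≤ n) (i : ℤ) : sPerm n i * sPerm n i = 1 :=
  Equiv.ext (sPerm_sPerm hn i)

lemma sPerm_inv (hn : 2 ≤ n) (i : ℤ) : (sPerm n i)⁻¹ = sPerm n i :=
  inv_eq_of_mul_eq_one_right (sPerm_mul_self hn i)

lemma mul_sPerm_mul_sPerm (hn : 2 ≤ n) (i : ℤ) (w : Equiv.Perm ℤ) :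
    w * sPerm n i * sPerm n i = w := by
  rw [mul_assoc, sPerm_mul_self hn, mul_one]

lemma sPerm_mul_sPerm_mul (hn : 2 ≤ n) (i : ℤ) (w : Equiv.Perm ℤ) :
    sPerm n i * (sPerm n i * w) = w := by
  rw [← mul_assoc, sPerm_mul_self hn, one_mul]

lemma isAffine_sPerm (hn : 2 ≤ n) (i : ℤ) : IsAffine n (sPerm n i) := by
  refine ⟨sPerm_apply_add i, ?_⟩
  set g : ℤ → ℤ := fun x => if (n : ℤ) ∣ x - i then 1 else 0
  have hg : Function.Periodic g n := fun x => by
    simp only [g, show x + n - i = x - i + n by ring, dvd_add_self_right]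
  have hstep : ∀ x, sPerm n i x - x = g x - g (x - 1) := fun x => by
    simp only [g, sub_sub, add_comm (1 : ℤ) i]
    by_cases h : (n : ℤ) ∣ x - i
    · rw [sPerm_apply_of_dvd h, if_pos h, if_neg (not_dvd_sub_add_one hn h)]; ring
    by_cases h' : (n : ℤ) ∣ x - (i + 1)
    · rw [sPerm_apply_of_dvd_add_one hn h', if_neg h, if_pos h']; ring
    · rw [sPerm_apply_of_not_dvd h h', if_neg h, if_neg h']; ring
  have hshift := sum_window_comp (v := Equiv.subRight (1 : ℤ)) (by omega)
    (fun x => by simp only [Equiv.subRight_apply]; ring) hg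
  simp only [Equiv.subRight_apply] at hshift
  simp only [hstep, Finset.sum_sub_distrib, hshift, sub_self]

lemma IsAdjacentPair.sPerm_fst {p : ℤ × ℤ} (h : IsAdjacentPair n i p) : sPerm n i p.1 = p.2 := by
  rw [sPerm_apply_of_dvd h.1, h.2]

lemma IsAdjacentPair.sPerm_snd (hn : 2 ≤ n) {p : ℤ × ℤ} (h : IsAdjacentPair n i p) :
    sPerm n i p.2 = p.1 := by
  rw [h.2, sPerm_apply_of_dvd_add_one hn (by rw [add_sub_add_right_eq_sub]; exact h.1)]
  ring

lemma sPerm_lt_sPerm {a b : ℤ} (hab : a < b) (h : ¬ IsAdjacentPair n i (a, b)) :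
    sPerm n i a < sPerm n i b := by
  by_contra hba
  have hne : sPerm n i a ≠ sPerm n i b := fun he => hab.ne ((sPerm n i).injective he)
  have ha := @sPerm_apply_le n i a
  have hb := @le_sPerm_apply n i b
  exact h ⟨dvd_sub_of_sPerm_apply_eq (show sPerm n i a = a + 1 by omega), show b = a + 1 by omega⟩

lemma sPerm_lt_sPerm_iff {a b : ℤ} (h : ¬ IsAdjacentPair n i (a, b))
    (h' : ¬ IsAdjacentPair n i (b, a)) : sPerm n i a < sPerm n i b ↔ a < b := by
  refine ⟨fun hs => ?_, fun hab => sPerm_lt_sPerm hab h⟩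
  rcases lt_trichotomy a b with hab | rfl | hab
  · exact hab
  · exact absurd hs (lt_irrefl _)
  · exact absurd (sPerm_lt_sPerm hab h') (not_lt.mpr hs.le)

lemma isAdjacentPair_sPerm_iff (hn : 2 ≤ n) {a b : ℤ} :
    IsAdjacentPair n i (sPerm n i a, sPerm n i b) ↔ IsAdjacentPair n i (b, a) := by
  constructor
  · intro h
    have h₁ := h.sPerm_fst
    have h₂ := h.sPerm_snd hn
    simp only [sPerm_sPerm hn] at h₁ h₂
    rwa [show (b, a) = (sPerm n i a, sPerm n i b) from Prod.ext h₂ h₁]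
  · intro h
    rwa [show (sPerm n i a, sPerm n i b) = (b, a) from Prod.ext (h.sPerm_snd hn) h.sPerm_fst]

lemma sPerm_eq_of_dvd {a : ℤ} (h : (n : ℤ) ∣ a - j) : sPerm n a = sPerm n j := by
  ext x
  simp only [sPerm_apply, show x - a = x - j - (a - j) by ring,
    show x - (a + 1) = x - (j + 1) - (a - j) by ring, dvd_sub_left h]

lemma IsAffine.mul_tPerm (hw : IsAffine n w) (a b : ℤ) :
    w * tPerm n a b = tPerm n (w a) (w b) * w := by
  ext x
  show w (tFun n a b x) = tFun n (w a) (w b) (w x)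
  simp only [tFun, hw.dvd_sub_iff]
  split_ifs with h₁ h₂
  · obtain ⟨k, hk⟩ := h₁
    rw [show x + (b - a) = b + k * n by linarith, show x = a + k * n by linarith,
      hw.apply_add_mul, hw.apply_add_mul]
    ring
  · obtain ⟨k, hk⟩ := h₂
    rw [show x - (b - a) = a + k * n by linarith, show x = b + k * n by linarith,
      hw.apply_add_mul, hw.apply_add_mul]
    ring
  · rfl

end SimpleReflection

section Length

variable {n : ℕ} {i j : ℤ} {v w : Equiv.Perm ℤ}

def IsInversion (w : Equiv.Perm ℤ) (p : ℤ × ℤ) : Prop := p.1 < p.2 ∧ w p.2 < w p.1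

def IsTwoCycle (z : Equiv.Perm ℤ) (p : ℤ × ℤ) : Prop := p.1 < p.2 ∧ z p.1 = p.2

lemma affLen_eq_windowCard : affLen n w = windowCard n (IsInversion w) := rfl

lemma absLen_eq_windowCard : absLen n w = windowCard n (IsTwoCycle w) := rfl

lemma IsAffine.isInversion_pairShift (hw : IsAffine n w) (m : ℤ) (p : ℤ × ℤ) :
    IsInversion w (pairShift n m p) ↔ IsInversion w p := by
  simp only [IsInversion, pairShift, hw.apply_add_mul, add_lt_add_iff_right]

lemma IsAffine.isTwoCycle_pairShift (hw : IsAffine n w) (m : ℤ) (p : ℤ × ℤ) :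
    IsTwoCycle w (pairShift n m p) ↔ IsTwoCycle w p := by
  simp only [IsTwoCycle, pairShift, hw.apply_add_mul, add_lt_add_iff_right, add_left_inj]

lemma IsAffine.prodCongr_pairShift (hw : IsAffine n w) (m : ℤ) (p : ℤ × ℤ) :
    Equiv.prodCongr w w (pairShift n m p) = pairShift n m (Equiv.prodCongr w w p) := by
  simp [pairShift, hw.apply_add_mul]

lemma IsAffine.exists_abs_sub_le (hn : 0 < n) (hw : IsAffine n w) :
    ∃ M, ∀ x, |w x - x| ≤ M := by
  obtain ⟨M, hM⟩ := ((Set.finite_Ico (0 : ℤ) n).image fun x => |w x - x|).bddAbove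
  refine ⟨M, fun x => ?_⟩
  obtain ⟨y, hy, hxy⟩ :=
    ((periodic_apply_sub hw.1).comp abs).exists_mem_Ico₀ (by exact_mod_cast hn) x
  rw [show |w x - x| = |w y - y| from hxy]
  exact hM ⟨y, hy, rfl⟩

lemma finite_window_of_le {P : ℤ × ℤ → Prop} (B : ℤ) (h : ∀ p, P p → p.1 < p.2 ∧ p.2 ≤ p.1 + B) :
    {p : ℤ × ℤ | 1 ≤ p.1 ∧ p.1 ≤ (n : ℤ) ∧ P p}.Finite :=
  ((Set.finite_Icc (1 : ℤ) n).prod (Set.finite_Icc (1 : ℤ) (n + B))).subset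
    fun p ⟨h₁, h₂, hp⟩ => ⟨⟨h₁, h₂⟩, by have := h p hp; constructor <;> omega⟩

lemma IsAffine.finite_inversions (hn : 0 < n) (hw : IsAffine n w) :
    {p : ℤ × ℤ | 1 ≤ p.1 ∧ p.1 ≤ (n : ℤ) ∧ IsInversion w p}.Finite := by
  obtain ⟨M, hM⟩ := hw.exists_abs_sub_le hn
  refine finite_window_of_le (2 * M) fun p hp => ⟨hp.1, ?_⟩
  have h₁ := abs_le.mp (hM p.1)
  have h₂ := abs_le.mp (hM p.2)
  have := hp.2
  omega

lemma IsAffine.finite_twoCycles (hn : 0 < n) (hw : IsAffine n w) :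
    {p : ℤ × ℤ | 1 ≤ p.1 ∧ p.1 ≤ (n : ℤ) ∧ IsTwoCycle w p}.Finite := by
  obtain ⟨M, hM⟩ := hw.exists_abs_sub_le hn
  refine finite_window_of_le M fun p hp => ⟨hp.1, ?_⟩
  have h₁ := abs_le.mp (hM p.1)
  rw [hp.2] at h₁
  omega

lemma IsAffine.apply_lt_apply_of_isAdjacentPair (hw : IsAffine n w) (h : w i < w (i + 1))
    {p : ℤ × ℤ} (hp : IsAdjacentPair n i p) : w p.1 < w p.2 := by
  obtain ⟨⟨k, hk⟩, h₂⟩ := hp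
  rw [h₂, show p.1 = i + k * n by linarith, show i + k * n + 1 = i + 1 + k * n by ring,
    hw.apply_add_mul, hw.apply_add_mul]
  linarith

/-- The inversions of `w s_i` are the images under `s_i` of those of `w`, plus the translates
of `(i, i + 1)`. -/
theorem IsAffine.affLen_mul_sPerm_of_lt (hn : 2 ≤ n) (hw : IsAffine n w) (h : w i < w (i + 1)) :
    affLen n (w * sPerm n i) = affLen n w + 1 := by
  have hs := isAffine_sPerm hn i
  have hasc := fun p => hw.apply_lt_apply_of_isAdjacentPair h (p := p)
  have hsplit : IsInversion (w * sPerm n i) =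
      fun p => (IsInversion (w * sPerm n i) p ∧ ¬ IsAdjacentPair n i p) ∨ IsAdjacentPair n i p := by
    funext p
    by_cases hp : IsAdjacentPair n i p
    · simp only [hp, not_true, and_false, false_or, eq_iff_iff, iff_true, IsInversion,
        Equiv.Perm.mul_apply, hp.sPerm_fst, hp.sPerm_snd hn]
      exact ⟨by rw [hp.2]; omega, hasc p hp⟩
    · simp [hp]
  rw [affLen_eq_windowCard, hsplit, windowCard_or_isAdjacentPair (by omega) i
    (fun p hp h' => h'.2 hp) ((hw.mul (by omega) hs).finite_inversions (by omega) |>.subset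
      fun p hp => ⟨hp.1, hp.2.1, hp.2.2.1⟩)]
  congr 1
  refine windowCard_congr (by omega) (Equiv.prodCongr (sPerm n i) (sPerm n i))
    hs.prodCongr_pairShift (fun m p => (hw.isInversion_pairShift m p).mpr) fun p => ?_
  simp only [Equiv.prodCongr_apply, Prod.map, IsInversion, Equiv.Perm.mul_apply, sPerm_sPerm hn,
    isAdjacentPair_sPerm_iff hn]
  constructor
  · rintro ⟨⟨hlt, hinv⟩, hrev⟩
    exact ⟨(sPerm_lt_sPerm_iff (fun hp => (hasc _ hp).not_gt hinv) hrev).mp hlt, hinv⟩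
  · rintro ⟨hlt, hinv⟩
    exact ⟨⟨sPerm_lt_sPerm hlt fun hp => (hasc _ hp).not_gt hinv, hinv⟩,
      fun hp => by have := hp.2; omega⟩

lemma IsAffine.affLen_mul_sPerm_of_gt (hn : 2 ≤ n) (hw : IsAffine n w) (h : w (i + 1) < w i) :
    affLen n (w * sPerm n i) + 1 = affLen n w := by
  have hu := hw.mul (by omega) (isAffine_sPerm hn i)
  have := hu.affLen_mul_sPerm_of_lt hn (i := i) (by
    show w (sPerm n i i) < w (sPerm n i (i + 1))
    rwa [sPerm_apply_of_dvd (by simp), sPerm_apply_of_dvd_add_one hn (by simp),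
      add_sub_cancel_right])
  rwa [mul_sPerm_mul_sPerm hn, eq_comm] at this

lemma IsAffine.affLen_mul_sPerm_eq_or (hn : 2 ≤ n) (hw : IsAffine n w) (i : ℤ) :
    affLen n (w * sPerm n i) = affLen n w + 1 ∨ affLen n (w * sPerm n i) + 1 = affLen n w := by
  rcases lt_or_gt_of_ne (w.injective.ne (show i ≠ i + 1 by omega)) with h | h
  · exact Or.inl (hw.affLen_mul_sPerm_of_lt hn h)
  · exact Or.inr (hw.affLen_mul_sPerm_of_gt hn h)

lemma IsAffine.affLen_lt_affLen_mul_sPerm_iff (hn : 2 ≤ n) (hw : IsAffine n w) :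
    affLen n w < affLen n (w * sPerm n i) ↔ w i < w (i + 1) := by
  refine ⟨fun hl => ?_, fun h => by rw [hw.affLen_mul_sPerm_of_lt hn h]; omega⟩
  rcases lt_or_gt_of_ne (w.injective.ne (show i ≠ i + 1 by omega)) with h | h
  · exact h
  · have := hw.affLen_mul_sPerm_of_gt hn h; omega

lemma IsAffine.affLen_inv (hn : 0 < n) (hw : IsAffine n w) : affLen n w⁻¹ = affLen n w := by
  have hwi := hw.inv hn
  refine (windowCard_congr hn ((Equiv.prodCongr w⁻¹ w⁻¹).trans (Equiv.prodComm ℤ ℤ))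
    (fun m p => ?_) (fun m p => (hwi.isInversion_pairShift m p).mpr) fun p => ?_).symm
  · simp only [pairShift, Equiv.trans_apply, Equiv.prodCongr_apply, Prod.map, Equiv.prodComm_apply,
      Prod.swap_prod_mk, hwi.apply_add_mul]
  · simp only [IsInversion, Equiv.trans_apply, Equiv.prodCongr_apply, Prod.map,
      Equiv.prodComm_apply, Prod.fst_swap, Prod.snd_swap, Equiv.Perm.coe_inv,
      Equiv.apply_symm_apply]
    exact and_comm

lemma IsAffine.affLen_sPerm_mul (hn : 2 ≤ n) (hw : IsAffine n w) :
    affLen n (sPerm n i * w) = affLen n (w⁻¹ * sPerm n i) := by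
  rw [← ((isAffine_sPerm hn i).mul (by omega) hw).affLen_inv (by omega), mul_inv_rev, sPerm_inv hn]

lemma IsAffine.affLen_sPerm_mul_eq_or (hn : 2 ≤ n) (hw : IsAffine n w) (i : ℤ) :
    affLen n (sPerm n i * w) = affLen n w + 1 ∨ affLen n (sPerm n i * w) + 1 = affLen n w := by
  rw [hw.affLen_sPerm_mul hn, ← hw.affLen_inv (by omega)]
  exact (hw.inv (by omega)).affLen_mul_sPerm_eq_or hn i

lemma IsAffine.affLen_lt_affLen_sPerm_mul_iff (hn : 2 ≤ n) (hw : IsAffine n w) :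
    affLen n w < affLen n (sPerm n i * w) ↔ w⁻¹ i < w⁻¹ (i + 1) := by
  rw [hw.affLen_sPerm_mul hn, ← hw.affLen_inv (by omega)]
  exact (hw.inv (by omega)).affLen_lt_affLen_mul_sPerm_iff hn

lemma IsAffine.eq_one_of_forall_lt (hn : 0 < n) (hw : IsAffine n w) (h : ∀ x, w x < w (x + 1)) :
    w = 1 := by
  have hmono := strictMono_int_of_lt_succ h
  have hstep : ∀ x, w (x + 1) = w x + 1 := fun x => by
    obtain ⟨y, hy⟩ := w.surjective (w x + 1)
    have hxy : x < y := hmono.lt_iff_lt.mp (by omega)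
    have := hmono.monotone (show x + 1 ≤ y by omega)
    have := h x
    omega
  have hconst : ∀ x, w x - x = w 0 := fun x => by
    induction x using Int.induction_on with
    | zero => simp
    | succ k ih => rw [hstep]; linarith
    | pred k ih => have := hstep (-k - 1); rw [sub_add_cancel] at this; linarith
  have hsum := hw.2
  simp only [hconst, Finset.sum_const, Int.card_Icc, add_sub_cancel_right, Int.toNat_natCast,
    nsmul_eq_mul, mul_eq_zero, Nat.cast_eq_zero] at hsum
  have h0 : w 0 = 0 := hsum.resolve_left (by omega)
  ext x
  have := hconst x
  simp only [Equiv.Perm.one_apply]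
  omega

lemma IsAffine.exists_apply_add_one_lt (hn : 0 < n) (hw : IsAffine n w) (h : w ≠ 1) :
    ∃ i, w (i + 1) < w i := by
  by_contra! hle
  exact h (hw.eq_one_of_forall_lt hn fun x =>
    (hle x).lt_of_ne (w.injective.ne (show x ≠ x + 1 by omega)))

lemma affLen_one : affLen n 1 = 0 :=
  Nat.card_eq_zero.mpr (Or.inl ⟨fun ⟨_, _, _, h, h'⟩ => lt_asymm h h'⟩)

lemma absLen_one : absLen n 1 = 0 :=
  Nat.card_eq_zero.mpr (Or.inl ⟨fun ⟨_, _, _, h, h'⟩ => h.ne h'⟩)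

theorem IsAffine.induction_on (hn : 2 ≤ n) (hw : IsAffine n w) {P : Equiv.Perm ℤ → Prop}
    (one : P 1) (mul : ∀ v i, IsAffine n v → affLen n (v * sPerm n i) = affLen n v + 1 →
      P v → P (v * sPerm n i)) : P w := by
  induction h : affLen n w using Nat.strong_induction_on generalizing w with
  | _ k ih =>
    by_cases h1 : w = 1
    · exact h1 ▸ one
    obtain ⟨i, hi⟩ := hw.exists_apply_add_one_lt (by omega) h1
    have hv := hw.mul (by omega) (isAffine_sPerm hn i)
    have hlen := hw.affLen_mul_sPerm_of_gt hn hi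
    have := mul _ i hv (by rw [mul_sPerm_mul_sPerm hn]; omega) (ih _ (by omega) hv rfl)
    rwa [mul_sPerm_mul_sPerm hn] at this

/-- The lifting property. The hypotheses force `v⁻¹` to map `(i, i + 1)` to a translate of
`(j, j + 1)`, so `v` conjugates `s_j` to `s_i`. -/
theorem IsAffine.sPerm_mul_eq_mul_sPerm (hn : 2 ≤ n) (hv : IsAffine n v)
    (h₁ : affLen n v < affLen n (sPerm n i * v))
    (h₂ : affLen n (sPerm n i * (v * sPerm n j)) < affLen n (v * sPerm n j)) :
    sPerm n i * v = v * sPerm n j := by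
  have hvs := hv.mul (by omega) (isAffine_sPerm hn j)
  have hlt := (hv.affLen_lt_affLen_sPerm_mul_iff hn).mp h₁
  have hgt : ¬ sPerm n j (v⁻¹ i) < sPerm n j (v⁻¹ (i + 1)) := fun h => by
    have := (hvs.affLen_lt_affLen_sPerm_mul_iff hn (i := i)).mpr
      (by rwa [mul_inv_rev, sPerm_inv hn])
    omega
  have hadj : IsAdjacentPair n j (v⁻¹ i, v⁻¹ (i + 1)) := by
    by_contra hadj
    exact hgt (sPerm_lt_sPerm hlt hadj)
  have hvi : v (v⁻¹ i) = i := by simp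
  have hvi' : v (v⁻¹ i + 1) = i + 1 := by rw [← hadj.2]; simp
  rw [← sPerm_eq_of_dvd hadj.1]
  show _ = v * tPerm n _ _
  rw [hv.mul_tPerm, hvi, hvi']
  rfl

end Length

section Involution

variable {n : ℕ} {i x : ℤ} {z : Equiv.Perm ℤ}

lemma apply_apply_of_inv_eq_self (hz : z⁻¹ = z) (x : ℤ) : z (z x) = x := by
  conv_lhs => arg 1; rw [← hz]
  simp

lemma IsAffine.apply_ne_add_one (hz : IsAffine n z) (hzz : z⁻¹ = z) (h : z i < z (i + 1))
    (hx : (n : ℤ) ∣ x - i) : z x ≠ x + 1 := by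
  obtain ⟨k, hk⟩ := hx
  intro hzx
  rw [show x = i + k * n by linarith, hz.apply_add_mul] at hzx
  have hzi : z i = i + 1 := by linarith
  have := apply_apply_of_inv_eq_self hzz i
  rw [hzi] at this
  omega

lemma IsAffine.apply_eq_of_commute (hn : 2 ≤ n) (hz : IsAffine n z) (hzz : z⁻¹ = z)
    (hc : sPerm n i * z = z * sPerm n i) (h : z i < z (i + 1)) :
    z i = i ∧ z (i + 1) = i + 1 := by
  have h₁ : sPerm n i (z i) = z (i + 1) := by
    simpa [sPerm_apply_of_dvd] using congrArg (· i) hc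
  have h₂ : z (i + 1) = z i + 1 := by
    have := @sPerm_apply_le n i (z i)
    omega
  obtain ⟨k, hk⟩ := dvd_sub_of_sPerm_apply_eq (h₁.trans h₂)
  have hzi : z i = i + k * n := by linarith
  have := apply_apply_of_inv_eq_self hzz i
  rw [hzi, hz.apply_add_mul, hzi] at this
  have hk0 : k * (n : ℤ) = 0 := by linarith
  rcases mul_eq_zero.mp hk0 with hk0 | hk0
  · subst hk0
    constructor <;> omega
  · omega

theorem IsAffine.absLen_mul_sPerm (hn : 2 ≤ n) (hz : IsAffine n z) (h₁ : z i = i)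
    (h₂ : z (i + 1) = i + 1) : absLen n (z * sPerm n i) = absLen n z + 1 := by
  have hfix : ∀ x, (n : ℤ) ∣ x - i ∨ (n : ℤ) ∣ x - (i + 1) → z x = x := by
    rintro x (⟨k, hk⟩ | ⟨k, hk⟩)
    · rw [show x = i + k * n by linarith, hz.apply_add_mul, h₁]
    · rw [show x = i + 1 + k * n by linarith, hz.apply_add_mul, h₂]
  have hsplit : IsTwoCycle (z * sPerm n i) = fun p => IsTwoCycle z p ∨ IsAdjacentPair n i p := by
    funext ⟨a, b⟩
    simp only [IsTwoCycle, IsAdjacentPair, Equiv.Perm.mul_apply, eq_iff_iff]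
    by_cases ha : (n : ℤ) ∣ a - i
    · rw [sPerm_apply_of_dvd ha, hfix _ (Or.inr (by rwa [add_sub_add_right_eq_sub])),
        hfix a (Or.inl ha)]
      simp only [ha, true_and]
      omega
    by_cases ha' : (n : ℤ) ∣ a - (i + 1)
    · rw [sPerm_apply_of_dvd_add_one hn ha', hfix _ (Or.inl (by rwa [sub_sub, add_comm 1 i])),
        hfix a (Or.inr ha')]
      simp only [ha, false_and, or_false]
      omega
    · simp [sPerm_apply_of_not_dvd ha ha', ha]
  rw [absLen_eq_windowCard, hsplit, windowCard_or_isAdjacentPair (by omega) i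
    (fun p hp hcyc => ?_) (hz.finite_twoCycles (by omega)), absLen_eq_windowCard]
  have := hcyc.2
  rw [hfix _ (Or.inl hp.1)] at this
  exact hcyc.1.ne this

theorem IsAffine.absLen_sPerm_mul_mul_sPerm (hn : 2 ≤ n) (hz : IsAffine n z) (hzz : z⁻¹ = z)
    (h : z i < z (i + 1)) : absLen n (sPerm n i * (z * sPerm n i)) = absLen n z := by
  have hnadj : ∀ a b, z a = b → ¬ IsAdjacentPair n i (a, b) ∧ ¬ IsAdjacentPair n i (b, a) :=
    fun a b hab => ⟨fun hp => hz.apply_ne_add_one hzz h hp.1 (hab.trans hp.2),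
      fun hp => hz.apply_ne_add_one hzz h hp.1
        (by rw [← hab, apply_apply_of_inv_eq_self hzz, hab]; exact hp.2)⟩
  rw [absLen_eq_windowCard, absLen_eq_windowCard]
  refine windowCard_congr (by omega) (Equiv.prodCongr (sPerm n i) (sPerm n i))
    (isAffine_sPerm hn i).prodCongr_pairShift (fun m p => (hz.isTwoCycle_pairShift m p).mpr)
    fun ⟨a, b⟩ => ?_
  simp only [Equiv.prodCongr_apply, Prod.map, IsTwoCycle, Equiv.Perm.mul_apply, sPerm_sPerm hn,
    (sPerm n i).injective.eq_iff]
  exact and_congr_left fun hab => sPerm_lt_sPerm_iff (hnadj a b hab).1 (hnadj a b hab).2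

theorem IsAffine.affLen_sPerm_mul_mul_sPerm (hn : 2 ≤ n) (hz : IsAffine n z) (hzz : z⁻¹ = z)
    (h : z i < z (i + 1)) (hc : sPerm n i * z ≠ z * sPerm n i) :
    affLen n (sPerm n i * (z * sPerm n i)) = affLen n (z * sPerm n i) + 1 := by
  have hzs := hz.mul (by omega) (isAffine_sPerm hn i)
  refine (hzs.affLen_sPerm_mul_eq_or hn i).resolve_right fun hlt => hc ?_
  refine hz.sPerm_mul_eq_mul_sPerm hn ?_ (by omega)
  rw [hz.affLen_sPerm_mul hn, hzz, hz.affLen_mul_sPerm_of_lt hn h]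
  omega

end Involution

section Demazure

variable {n : ℕ} {D : Equiv.Perm ℤ → Equiv.Perm ℤ → Equiv.Perm ℤ} {i : ℤ}
  {a b c v w z : Equiv.Perm ℤ}

lemma IsDemazure.assoc (hD : IsDemazure n D) (ha : IsAffine n a) (hb : IsAffine n b)
    (hc : IsAffine n c) : D (D a b) c = D a (D b c) :=
  hD.1 a b c ha hb hc

lemma IsDemazure.isAffine (hD : IsDemazure n D) (ha : IsAffine n a) (hb : IsAffine n b) :
    IsAffine n (D a b) :=
  hD.2.1 a b ha hb

lemma IsDemazure.apply_one (hD : IsDemazure n D) (hw : IsAffine n w) : D w 1 = w :=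
  (hD.2.2.1 w hw).1

lemma IsDemazure.one_apply (hD : IsDemazure n D) (hw : IsAffine n w) : D 1 w = w :=
  (hD.2.2.1 w hw).2

lemma IsDemazure.apply_sPerm (hn : 2 ≤ n) (hD : IsDemazure n D) (hw : IsAffine n w) (i : ℤ) :
    D w (sPerm n i) = if affLen n w < affLen n (w * sPerm n i) then w * sPerm n i else w := by
  split_ifs with h
  · exact (hD.2.2.2 w hw i).2 h
  · exact (hD.2.2.2 w hw i).1 (by rcases hw.affLen_mul_sPerm_eq_or hn i with h' | h' <;> omega)

theorem IsDemazure.sPerm_apply (hn : 2 ≤ n) (hD : IsDemazure n D) (hw : IsAffine n w) (i : ℤ) :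
    D (sPerm n i) w = if affLen n w < affLen n (sPerm n i * w) then sPerm n i * w else w := by
  revert i
  refine hw.induction_on hn (P := fun w => ∀ i, D (sPerm n i) w =
      if affLen n w < affLen n (sPerm n i * w) then sPerm n i * w else w)
    (fun i => ?_) fun v j hv hvj ih i => ?_
  · have := isAffine_one.affLen_lt_affLen_sPerm_mul_iff hn (i := i)
    rw [mul_one] at this ⊢
    rw [hD.apply_one (isAffine_sPerm hn i), if_pos (this.mpr (by simp))]
  have hs := isAffine_sPerm hn i
  have hsj := isAffine_sPerm hn j
  have hsv := hs.mul (by omega) hv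
  have hDv : D v (sPerm n j) = v * sPerm n j := by rw [hD.apply_sPerm hn hv, if_pos (by omega)]
  rw [← hDv, ← hD.assoc hs hv hsj, ih i, hDv]
  have := hv.affLen_sPerm_mul_eq_or hn i
  have := hsv.affLen_mul_sPerm_eq_or hn j
  by_cases hup : affLen n v < affLen n (sPerm n i * v)
  · rw [if_pos hup, hD.apply_sPerm hn hsv]
    by_cases hup' : affLen n (sPerm n i * v) < affLen n (sPerm n i * v * sPerm n j)
    · rw [if_pos hup', if_pos (by rw [← mul_assoc]; omega), mul_assoc]
    · have hlift : sPerm n i * v = v * sPerm n j :=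
        hv.sPerm_mul_eq_mul_sPerm hn hup (by rw [← mul_assoc]; omega)
      rw [if_neg hup', hlift, if_neg (by rw [← hlift, sPerm_mul_sPerm_mul hn]; omega)]
  · rw [if_neg hup, hDv, if_neg]
    rw [← mul_assoc]
    omega

lemma IsDemazure.inv_apply_sPerm (hn : 2 ≤ n) (hD : IsDemazure n D) (hw : IsAffine n w) (i : ℤ) :
    (D w (sPerm n i))⁻¹ = D (sPerm n i) w⁻¹ := by
  have hwi := hw.inv (by omega)
  rw [hD.apply_sPerm hn hw, hD.sPerm_apply hn hwi, hw.affLen_inv (by omega),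
    hwi.affLen_sPerm_mul hn, inv_inv]
  split_ifs <;> simp [sPerm_inv hn]

theorem IsDemazure.inv_apply (hn : 2 ≤ n) (hD : IsDemazure n D) (ha : IsAffine n a)
    (hb : IsAffine n b) : (D a b)⁻¹ = D b⁻¹ a⁻¹ := by
  suffices ∀ a, IsAffine n a → (D a b)⁻¹ = D b⁻¹ a⁻¹ from this a ha
  refine hb.induction_on hn (P := fun b => ∀ a, IsAffine n a → (D a b)⁻¹ = D b⁻¹ a⁻¹)
    (fun a ha => ?_) fun c j hc hcj ih a ha => ?_
  · rw [hD.apply_one ha, inv_one, hD.one_apply (ha.inv (by omega))]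
  have hs := isAffine_sPerm hn j
  have hci := hc.inv (by omega)
  have hai := ha.inv (by omega)
  have hDc : D c (sPerm n j) = c * sPerm n j := by rw [hD.apply_sPerm hn hc, if_pos (by omega)]
  calc (D a (c * sPerm n j))⁻¹ = (D (D a c) (sPerm n j))⁻¹ := by rw [hD.assoc ha hc hs, hDc]
    _ = D (sPerm n j) (D c⁻¹ a⁻¹) := by rw [hD.inv_apply_sPerm hn (hD.isAffine ha hc), ih a ha]
    _ = D (c * sPerm n j)⁻¹ a⁻¹ := by rw [← hD.assoc hs hci hai, ← hD.inv_apply_sPerm hn hc, hDc]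

lemma IsDemazure.inv_apply_inv_self (hn : 2 ≤ n) (hD : IsDemazure n D) (hw : IsAffine n w) :
    (D w⁻¹ w)⁻¹ = D w⁻¹ w := by
  rw [hD.inv_apply hn (hw.inv (by omega)) hw, inv_inv]

/-- `v = (v s_i) ∘ s_i`, and every `x ∘ s_i` has a right descent at `i`. -/
theorem IsDemazure.affLen_apply_mul_sPerm_lt (hn : 2 ≤ n) (hD : IsDemazure n D) (ha : IsAffine n a)
    (hv : IsAffine n v) (h : affLen n (v * sPerm n i) < affLen n v) :
    affLen n (D a v * sPerm n i) < affLen n (D a v) := by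
  have hs := isAffine_sPerm hn i
  have hu := hv.mul (by omega) hs
  have hv' : D (v * sPerm n i) (sPerm n i) = v := by
    rw [hD.apply_sPerm hn hu, mul_sPerm_mul_sPerm hn, if_pos h]
  have hx := hD.isAffine ha hu
  rw [← hv', ← hD.assoc ha hu hs, hD.apply_sPerm hn hx]
  split_ifs with hup
  · rwa [mul_sPerm_mul_sPerm hn]
  · rcases hx.affLen_mul_sPerm_eq_or hn i with h' | h' <;> omega

/-- `s_i ∘ z ∘ s_i`. -/
def demazureConj (n : ℕ) (D : Equiv.Perm ℤ → Equiv.Perm ℤ → Equiv.Perm ℤ) (i : ℤ)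
    (z : Equiv.Perm ℤ) : Equiv.Perm ℤ :=
  D (sPerm n i) (D z (sPerm n i))

theorem IsDemazure.inv_apply_mul_sPerm (hn : 2 ≤ n) (hD : IsDemazure n D) (hv : IsAffine n v)
    (h : affLen n v < affLen n (v * sPerm n i)) :
    D (v * sPerm n i)⁻¹ (v * sPerm n i) = demazureConj n D i (D v⁻¹ v) := by
  have hs := isAffine_sPerm hn i
  have hvi := hv.inv (by omega)
  have hDv : D v (sPerm n i) = v * sPerm n i := by rw [hD.apply_sPerm hn hv, if_pos h]
  calc D (v * sPerm n i)⁻¹ (v * sPerm n i) = D (D (sPerm n i) v⁻¹) (D v (sPerm n i)) := by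
        rw [← hD.inv_apply_sPerm hn hv, hDv]
    _ = demazureConj n D i (D v⁻¹ v) := by
        rw [hD.assoc hs hvi (hD.isAffine hv hs), ← hD.assoc hvi hv hs, demazureConj]

theorem IsDemazure.demazureConj_of_lt (hn : 2 ≤ n) (hD : IsDemazure n D) (hz : IsAffine n z)
    (hzz : z⁻¹ = z) (h : affLen n (z * sPerm n i) < affLen n z) : demazureConj n D i z = z := by
  rw [demazureConj, hD.apply_sPerm hn hz, if_neg (by omega), hD.sPerm_apply hn hz, if_neg]
  rw [hz.affLen_sPerm_mul hn, hzz]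
  omega

theorem IsDemazure.affLen_add_absLen_demazureConj (hn : 2 ≤ n) (hD : IsDemazure n D)
    (hz : IsAffine n z) (hzz : z⁻¹ = z) (h : affLen n z < affLen n (z * sPerm n i)) :
    affLen n (demazureConj n D i z) + absLen n (demazureConj n D i z) =
      affLen n z + absLen n z + 2 := by
  have hasc := (hz.affLen_lt_affLen_mul_sPerm_iff hn).mp h
  have hlen := hz.affLen_mul_sPerm_of_lt hn hasc
  rw [demazureConj, hD.apply_sPerm hn hz, if_pos h,
    hD.sPerm_apply hn (hz.mul (by omega) (isAffine_sPerm hn i))]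
  by_cases hc : sPerm n i * z = z * sPerm n i
  · obtain ⟨h₁, h₂⟩ := hz.apply_eq_of_commute hn hzz hc hasc
    rw [if_neg (by rw [← mul_assoc, hc, mul_sPerm_mul_sPerm hn]; omega),
      hz.absLen_mul_sPerm hn h₁ h₂]
    omega
  · rw [if_pos (by rw [hz.affLen_sPerm_mul_mul_sPerm hn hzz hasc hc]; omega),
      hz.affLen_sPerm_mul_mul_sPerm hn hzz hasc hc, hz.absLen_sPerm_mul_mul_sPerm hn hzz hasc]
    omega

theorem IsDemazure.affLen_add_absLen_le (hn : 2 ≤ n) (hD : IsDemazure n D) (hw : IsAffine n w) :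
    affLen n (D w⁻¹ w) + absLen n (D w⁻¹ w) ≤ 2 * affLen n w := by
  refine hw.induction_on hn (P := fun w => affLen n (D w⁻¹ w) + absLen n (D w⁻¹ w) ≤ 2 * affLen n w)
    ?_ fun v i hv hvi ih => ?_
  · simp [hD.apply_one isAffine_one, affLen_one, absLen_one]
  have hz := hD.isAffine (hv.inv (by omega)) hv
  have hzz := hD.inv_apply_inv_self hn hv
  rw [hD.inv_apply_mul_sPerm hn hv (by omega)]
  rcases hz.affLen_mul_sPerm_eq_or hn i with h | h
  · rw [hD.affLen_add_absLen_demazureConj hn hz hzz (by omega)]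
    omega
  · rw [hD.demazureConj_of_lt hn hz hzz (by omega)]
    omega

theorem IsDemazure.exists_two_mul_affLen_eq (hn : 2 ≤ n) (hD : IsDemazure n D)
    (hw : IsAffine n w) : ∃ v, IsAffine n v ∧ D v⁻¹ v = D w⁻¹ w ∧
      2 * affLen n v = affLen n (D w⁻¹ w) + absLen n (D w⁻¹ w) := by
  refine hw.induction_on hn (P := fun w => ∃ v, IsAffine n v ∧ D v⁻¹ v = D w⁻¹ w ∧
      2 * affLen n v = affLen n (D w⁻¹ w) + absLen n (D w⁻¹ w))
    ⟨1, isAffine_one, rfl, by simp [hD.apply_one isAffine_one, affLen_one, absLen_one]⟩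
    fun v i hv hvi ⟨u, hu, huv, hlen⟩ => ?_
  have hz := hD.isAffine (hv.inv (by omega)) hv
  have hzz := hD.inv_apply_inv_self hn hv
  rw [hD.inv_apply_mul_sPerm hn hv (by omega)]
  rcases hz.affLen_mul_sPerm_eq_or hn i with h | h
  · have hui : affLen n u < affLen n (u * sPerm n i) := by
      by_contra hle
      have := hD.affLen_apply_mul_sPerm_lt hn (hu.inv (by omega)) hu (i := i)
        (by rcases hu.affLen_mul_sPerm_eq_or hn i with h' | h' <;> omega)
      rw [huv] at this
      omega
    refine ⟨u * sPerm n i, hu.mul (by omega) (isAffine_sPerm hn i),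
      by rw [hD.inv_apply_mul_sPerm hn hu hui, huv], ?_⟩
    rw [hD.affLen_add_absLen_demazureConj hn hz hzz (by omega)]
    rcases hu.affLen_mul_sPerm_eq_or hn i with h' | h' <;> omega
  · rw [hD.demazureConj_of_lt hn hz hzz (by omega)]
    exact ⟨u, hu, huv, hlen⟩

end Demazure

theorem atom_length_general (n : ℕ) (hn : 2 ≤ n)
    (D : Equiv.Perm ℤ → Equiv.Perm ℤ → Equiv.Perm ℤ) (hD : IsDemazure n D)
    (z : Equiv.Perm ℤ)
    (w : Equiv.Perm ℤ) (hw : IsAtomOf n D z w) :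
    2 * affLen n w = affLen n z + absLen n z := by
  obtain ⟨hw, rfl, hmin⟩ := hw
  obtain ⟨v, hv, hvw, hlen⟩ := hD.exists_two_mul_affLen_eq hn hw
  have hle := hD.affLen_add_absLen_le hn hw
  have := hmin v hv hvw
  omega

/-- Every atom `w ∈ A(z)` of `z ∈ Ĩ_n` has length `ℓ(w) = ℓ̂(z) = (ℓ(z) + ℓ'(z))/2`. -/
theorem atom_length (n : ℕ) (hn : 2 ≤ n)
    (D : Equiv.Perm ℤ → Equiv.Perm ℤ → Equiv.Perm ℤ) (hD : IsDemazure n D)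
    (z : Equiv.Perm ℤ) (hz : IsAffine n z) (hzinv : ∀ x : ℤ, z (z x) = x)
    (w : Equiv.Perm ℤ) (hw : IsAtomOf n D z w) :
    2 * affLen n w = affLen n z + absLen n z :=
  atom_length_general n hn D hD z w hw
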